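/- Let V be a finite-dimensional complex vector space with a decomposition V = ⊕_ℤ V^i, and let T : V → V be a linear endomorphism preserving each V^i. Suppose V is also a module over an algebra R such that T commutes with the R-action, and V decomposes as ⊕_j V_j into pairwise non-isomorphic irreducible R-submodules. If each V_j satisfies the property that V_j ∩ V^i = 0 either for all even i or for all odd i, and V_j = ⊕_i (V_j ∩ V^i), then the projector onto the even part ⊕_{i even} V^i lies in the image of R in End(V). -/

import Mathlib

section IProj

variable {R V ι : Type*} [Ring R] [AddCommGroup V] [Module R V] [DecidableEq ι]
variable (A : ι → Submodule R V)

/-- Projection onto the `i`-th factor of an internal direct sum. -/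
noncomputable def iProj (h : DirectSum.IsInternal A) (i : ι) : V →ₗ[R] V :=
  ((A i).subtype.comp (DirectSum.component R ι (fun i => A i) i)).comp
    (LinearEquiv.ofBijective (DirectSum.coeLinearMap A) h).symm.toLinearMap

theorem iProj_apply (h : DirectSum.IsInternal A) (i : ι) (v : V) :
    iProj A h i v =
      (((LinearEquiv.ofBijective (DirectSum.coeLinearMap A) h).symm v) i : V) := rfl

theorem iProj_mem (h : DirectSum.IsInternal A) (i : ι) (v : V) : iProj A h i v ∈ A i := by
  rw [iProj_apply]; exact Subtype.coe_prop _

theorem iProj_of_mem (h : DirectSum.IsInternal A) {i : ι} {v : V} (hv : v ∈ A i) :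
    iProj A h i v = v := by
  rw [iProj_apply, h.ofBijective_coeLinearMap_of_mem hv]

theorem iProj_of_mem_ne (h : DirectSum.IsInternal A) {i j : ι} {v : V} (hij : i ≠ j)
    (hv : v ∈ A i) : iProj A h j v = 0 := by
  rw [iProj_apply, h.ofBijective_coeLinearMap_of_mem_ne hij hv]
  rfl

theorem iProj_sum [Fintype ι] (h : DirectSum.IsInternal A) (v : V) :
    ∑ i, iProj A h i v = v := by
  have hv : v ∈ ⨆ i, A i := by rw [h.submodule_iSup_eq_top]; trivial
  refine Submodule.iSup_induction A (motive := fun v => ∑ i, iProj A h i v = v) hv ?_ (by simp) ?_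
  · intro i w hw
    rw [Finset.sum_eq_single_of_mem i (Finset.mem_univ i)
      (fun k _ hk => iProj_of_mem_ne A h (Ne.symm hk) hw)]
    exact iProj_of_mem A h hw
  · intro x y hx hy
    simp only [map_add, Finset.sum_add_distrib, hx, hy]

end IProj

/-- If a finite-dimensional complex vector space `V` has a grading `V = ⊕ᵢ Vⁱ`, an
endomorphism `T` preserving each `Vⁱ` and commuting with the action of an algebra `R`,
and `V` decomposes into pairwise non-isomorphic irreducible `R`-submodules `V_j`, each
of which is graded and concentrated in a single parity, then the projector onto the
even part is realized by an element of `R`. -/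
theorem stmt3 {R V : Type*} [Ring R] [Algebra ℂ R]
    [AddCommGroup V] [Module ℂ V] [FiniteDimensional ℂ V]
    [Module R V] [IsScalarTower ℂ R V]
    (Vi : ℤ → Submodule ℂ V) (hVi : DirectSum.IsInternal Vi)
    (T : V →ₗ[ℂ] V) (hT : ∀ i, ∀ v ∈ Vi i, T v ∈ Vi i)
    (hTR : ∀ (r : R) (v : V), T (r • v) = r • T v)
    {J : Type*} [Fintype J] [DecidableEq J]
    (Vj : J → Submodule R V) (hVj : DirectSum.IsInternal Vj)
    (hsimple : ∀ j, IsSimpleModule R (Vj j))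
    (hnoniso : ∀ j j', j ≠ j' → IsEmpty ((Vj j) ≃ₗ[R] (Vj j')))
    (hgraded : ∀ j, (Vj j).restrictScalars ℂ =
      ⨆ i : ℤ, (Vj j).restrictScalars ℂ ⊓ Vi i)
    (hparity : ∀ j, (∀ i : ℤ, Even i → (Vj j).restrictScalars ℂ ⊓ Vi i = ⊥) ∨
      (∀ i : ℤ, Odd i → (Vj j).restrictScalars ℂ ⊓ Vi i = ⊥)) :
    ∃ r : R, (∀ i : ℤ, Even i → ∀ v ∈ Vi i, r • v = v) ∧
      (∀ i : ℤ, Odd i → ∀ v ∈ Vi i, r • v = 0) := by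
  classical
  set p : J → (V →ₗ[R] V) := iProj Vj hVj with hp
  set q : ℤ → (V →ₗ[ℂ] V) := iProj Vi hVi with hq
  have htop : ∀ v : V, v ∈ ⨆ k, Vj k := by
    intro v; rw [hVj.submodule_iSup_eq_top]; trivial
  -- every `R`-endomorphism preserves each `Vj k`
  have hpres : ∀ (f : V →ₗ[R] V) (k : J), ∀ v ∈ Vj k, f v ∈ Vj k := by
    intro f k v hv
    have hs : ∀ j, j ≠ k → p j (f v) = 0 := by
      intro j hjk
      haveI := hsimple k; haveI := hsimple j
      set φ : (Vj k) →ₗ[R] (Vj j) :=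
        LinearMap.codRestrict (Vj j) (((p j).comp f).comp (Vj k).subtype)
          (fun w => iProj_mem Vj hVj j _) with hφdef
      by_cases hφ : φ = 0
      · have : φ ⟨v, hv⟩ = 0 := by rw [hφ]; rfl
        have : (φ ⟨v, hv⟩ : V) = 0 := by rw [this]; rfl
        simpa [hφdef] using this
      · exact ((hnoniso k j (Ne.symm hjk)).false
          (LinearEquiv.ofBijective φ (φ.bijective_of_ne_zero hφ))).elim
    have h1 : f v = ∑ j, p j (f v) := (iProj_sum Vj hVj (f v)).symm
    have h2 : ∑ j, p j (f v) = p k (f v) :=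
      Finset.sum_eq_single_of_mem k (Finset.mem_univ k) (fun j _ hj => hs j hj)
    rw [h1, h2]
    exact iProj_mem Vj hVj k _
  -- each projection `p j` commutes with every `R`-endomorphism
  have hcommj : ∀ (f : V →ₗ[R] V) (j : J) (v : V), p j (f v) = f (p j v) := by
    intro f j v
    refine Submodule.iSup_induction Vj (motive := fun v => p j (f v) = f (p j v)) (htop v) ?_
      (by simp) ?_
    · intro k w hw
      rcases eq_or_ne j k with rfl | hjk
      · rw [iProj_of_mem Vj hVj (hpres f j w hw), iProj_of_mem Vj hVj hw]
      · rw [iProj_of_mem_ne Vj hVj (Ne.symm hjk) (hpres f k w hw),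
          iProj_of_mem_ne Vj hVj (Ne.symm hjk) hw, map_zero]
    · intro x y hx hy
      simp only [map_add, hx, hy]
  -- the grading projections preserve each `Vj j`
  have hqV : ∀ (i : ℤ) (j : J), ∀ v ∈ Vj j, q i v ∈ Vj j := by
    intro i j v hv
    have hv' : v ∈ ⨆ i' : ℤ, (Vj j).restrictScalars ℂ ⊓ Vi i' := by
      rw [← hgraded j]; exact hv
    refine Submodule.iSup_induction _ (motive := fun v => q i v ∈ Vj j) hv' ?_ (by simp) ?_
    · intro i' w hw
      rcases eq_or_ne i' i with rfl | hne
      · rw [iProj_of_mem Vi hVi hw.2]; exact hw.1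
      · rw [iProj_of_mem_ne Vi hVi hne hw.2]; exact (Vj j).zero_mem
    · intro x y hx hy
      rw [map_add]; exact Submodule.add_mem _ hx hy
  -- components of a vector of pure degree have pure degree
  have hpVi : ∀ (i : ℤ) (j : J), ∀ v ∈ Vi i,
      p j v ∈ (Vj j).restrictScalars ℂ ⊓ Vi i := by
    intro i j v hv
    refine ⟨iProj_mem Vj hVj j v, ?_⟩
    have hcomm2 : ∀ w : V, p j (q i w) = q i (p j w) := by
      intro w
      refine Submodule.iSup_induction Vj (motive := fun w => p j (q i w) = q i (p j w)) (htop w) ?_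
        (by simp) ?_
      · intro k u hu
        rcases eq_or_ne j k with rfl | hjk
        · rw [iProj_of_mem Vj hVj (hqV i j u hu), iProj_of_mem Vj hVj hu]
        · rw [iProj_of_mem_ne Vj hVj (Ne.symm hjk) (hqV i k u hu),
            iProj_of_mem_ne Vj hVj (Ne.symm hjk) hu, map_zero]
      · intro x y hx hy
        simp only [map_add, hx, hy]
    have hqiv : q i v = v := iProj_of_mem Vi hVi hv
    have : p j v = q i (p j v) := by
      conv_lhs => rw [← hqiv]
      exact hcomm2 v
    rw [this]
    exact iProj_mem Vi hVi i _
  -- the idempotent: sum of projections to the "even" simple summands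
  set S : Finset J :=
    Finset.univ.filter (fun j => ∀ i : ℤ, Odd i → (Vj j).restrictScalars ℂ ⊓ Vi i = ⊥) with hS
  set e : V →ₗ[R] V := ∑ j ∈ S, p j with he
  have he_even : ∀ i : ℤ, Even i → ∀ v ∈ Vi i, e v = v := by
    intro i hi v hv
    have hz : ∀ j ∈ Finset.univ, j ∉ S → p j v = 0 := by
      intro j _ hj
      have hpar : ∀ i : ℤ, Even i → (Vj j).restrictScalars ℂ ⊓ Vi i = ⊥ :=
        (hparity j).resolve_right (by simpa [hS] using hj)
      have hm := hpVi i j v hv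
      rw [hpar i hi] at hm
      simpa using hm
    have : e v = ∑ j ∈ S, p j v := by rw [he]; simp [LinearMap.sum_apply]
    rw [this, Finset.sum_subset (Finset.subset_univ S) hz]
    exact iProj_sum Vj hVj v
  have he_odd : ∀ i : ℤ, Odd i → ∀ v ∈ Vi i, e v = 0 := by
    intro i hi v hv
    have : e v = ∑ j ∈ S, p j v := by rw [he]; simp [LinearMap.sum_apply]
    rw [this]
    refine Finset.sum_eq_zero fun j hj => ?_
    have hbot : (Vj j).restrictScalars ℂ ⊓ Vi i = ⊥ := by
      have := (Finset.mem_filter.mp (hS ▸ hj)).2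
      exact this i hi
    have hm := hpVi i j v hv
    rw [hbot] at hm
    simpa using hm
  have hcomm : ∀ (f : V →ₗ[R] V) (v : V), e (f v) = f (e v) := by
    intro f v
    rw [he]
    simp only [LinearMap.sum_apply, map_sum]
    exact Finset.sum_congr rfl fun j _ => hcommj f j v
  -- semisimplicity
  haveI hss : IsSemisimpleModule R V :=
    isSemisimpleModule_of_isSemisimpleModule_submodule' (p := Vj)
      (fun j => by haveI := hsimple j; infer_instance) hVj.submodule_iSup_eq_top
  set n := Module.finrank ℂ V with hn
  haveI : IsSemisimpleModule R (Fin n → V) := by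
    refine isSemisimpleModule_of_isSemisimpleModule_submodule'
      (p := fun i : Fin n => LinearMap.range (LinearMap.single R (fun _ : Fin n => V) i))
      (fun i => IsSemisimpleModule.range _) ?_
    simp_rw [LinearMap.range_eq_map, Submodule.iSup_map_single, Submodule.pi_top]
  set b : Module.Basis (Fin n) ℂ V := Module.finBasis ℂ V with hb
  set Φ : R →ₗ[R] (Fin n → V) :=
    LinearMap.pi (fun i => LinearMap.toSpanSingleton R V (b i)) with hΦ
  set Msub := LinearMap.range Φ with hM
  obtain ⟨M', hc⟩ := exists_isCompl Msub
  set π : (Fin n → V) →ₗ[R] (Fin n → V) :=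
    Msub.subtype.comp (Msub.linearProjOfIsCompl M' hc) with hπ
  have hπ_mem : ∀ y, π y ∈ Msub := fun y => Subtype.coe_prop _
  have hπ_id : ∀ y ∈ Msub, π y = y := by
    intro y hy
    have : Msub.linearProjOfIsCompl M' hc y = ⟨y, hy⟩ := by
      have := Submodule.linearProjOfIsCompl_apply_left hc ⟨y, hy⟩
      exact this
    simp [hπ, this]
  set E : (Fin n → V) →ₗ[R] (Fin n → V) :=
    LinearMap.pi (fun i => e.comp (LinearMap.proj i)) with hE
  have hEapp : ∀ (y : Fin n → V) (i : Fin n), E y i = e (y i) := fun y i => rfl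
  -- `E` commutes with every `R`-endomorphism of `Fin n → V`
  have hB : ∀ (g : (Fin n → V) →ₗ[R] (Fin n → V)) (y : Fin n → V), g (E y) = E (g y) := by
    intro g y
    funext i
    have hsingle : ∀ z : Fin n → V, z = ∑ j, Pi.single j (z j) := by
      intro z
      funext k
      rw [Finset.sum_apply]
      exact (Fintype.sum_pi_single k z).symm
    have key : ∀ z : Fin n → V, g z i = ∑ j, ((LinearMap.proj i).comp
        (g.comp (LinearMap.single R (fun _ : Fin n => V) j))) (z j) := by
      intro z
      conv_lhs => rw [hsingle z]
      rw [map_sum, Finset.sum_apply]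
      rfl
    rw [hEapp, key y, key (E y), map_sum]
    refine Finset.sum_congr rfl fun j _ => ?_
    rw [hEapp]
    exact (hcomm _ (y j)).symm
  have hx : Φ 1 ∈ Msub := ⟨1, rfl⟩
  have hEx : E (Φ 1) ∈ Msub := by
    have h1 : π (E (Φ 1)) = E (π (Φ 1)) := hB π (Φ 1)
    rw [hπ_id _ hx] at h1
    rw [← h1]
    exact hπ_mem _
  obtain ⟨r, hr⟩ := hEx
  have hrb : ∀ i : Fin n, r • b i = e (b i) := by
    intro i
    have h1 := congrFun hr i
    have h2 : Φ r i = r • b i := by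
      simp [hΦ, LinearMap.pi_apply, LinearMap.toSpanSingleton_apply]
    have h3 : E (Φ 1) i = e (b i) := by
      rw [hEapp]
      congr 1
      simp [hΦ, LinearMap.pi_apply, LinearMap.toSpanSingleton_apply]
    rw [h2, h3] at h1
    exact h1
  -- extend from the basis to all of `V` by `ℂ`-linearity
  have hrv : ∀ v : V, r • v = e v := by
    have ρdef : ∀ _ : Unit, True := fun _ => trivial
    let ρ : V →ₗ[ℂ] V :=
      { toFun := fun v => r • v
        map_add' := fun x y => smul_add r x y
        map_smul' := fun c v => (smul_comm c r v).symm }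
    have hρ : ρ = LinearMap.restrictScalars ℂ e := by
      refine Module.Basis.ext b fun i => ?_
      simpa [ρ] using hrb i
    intro v
    have := DFunLike.congr_fun hρ v
    simpa [ρ] using this
  exact ⟨r, fun i hi v hv => by rw [hrv v]; exact he_even i hi v hv,
    fun i hi v hv => by rw [hrv v]; exact he_odd i hi v hv⟩
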